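/- arXiv:1407.0177 — 6 statements merged into one kernel-verified Lean document; each statement's English description precedes it below -/
import Mathlib

section
/- For all real x with 0 < x ≤ 1/48, we have 1/(1-x)^(3/2) < 1 + (3/2)x + (3/8)x^(3/2). -/
/-!
Substituting `x = u²` and `s = √(1 - x)`, the claim becomes `1 < (1 + 3/2 u² + 3/8 u³) s³`, and
squaring it gives the polynomial inequality `1 < (1 + 3/2 u² + 3/8 u³)² (1 - u²)³`. The difference
of the two sides is `u³ (3/4 - 15/4 u + O(u²))`, which is positive for `0 < u ≤ 1/6`.
-/

lemma one_lt_sq_mul_one_sub_sq_pow_three (u : ℝ) (hu : 0 < u) (hu6 : u ≤ 1/6) :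
    1 < (1 + 3/2 * u^2 + 3/8 * u^3)^2 * (1 - u^2)^3 := by
  have hexpand : (1 + 3/2 * u^2 + 3/8 * u^3)^2 * (1 - u^2)^3 - 1 = u^3 * (3/4 - 15/4*u
      - 9/8*u^2 + 89/64*u^3 - 9/8*u^4 + 213/64*u^5 + 21/8*u^6 - 117/64*u^7 - 9/8*u^8
      - 9/64*u^9) := by ring
  have hcofactor : 0 < 3/4 - 15/4*u - 9/8*u^2 + 89/64*u^3 - 9/8*u^4 + 213/64*u^5 + 21/8*u^6
      - 117/64*u^7 - 9/8*u^8 - 9/64*u^9 := by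
    have hu1 : u ≤ 1 := by linarith
    have hu2 : u^2 ≤ 1/36 := by nlinarith
    have hu4 : u^4 ≤ 1/36^2 := by nlinarith
    have hu7 : u^7 ≤ u^4 := pow_le_pow_of_le_one hu.le hu1 (by norm_num)
    have hu8 : u^8 ≤ u^4 := pow_le_pow_of_le_one hu.le hu1 (by norm_num)
    have hu9 : u^9 ≤ u^4 := pow_le_pow_of_le_one hu.le hu1 (by norm_num)
    have : 0 ≤ u^3 := by positivity
    have : 0 ≤ u^5 := by positivity
    have : 0 ≤ u^6 := by positivity
    linarith
  linarith [mul_pos (pow_pos hu 3) hcofactor]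

theorem stmt_0 (x : ℝ) (hx : 0 < x) (hx' : x ≤ 1/48) :
    1 / (1 - x) ^ ((3:ℝ)/2) < 1 + (3/2) * x + (3/8) * x ^ ((3:ℝ)/2) := by
  have hx1 : 0 < 1 - x := by linarith
  rw [Real.rpow_div_two_eq_sqrt 3 hx.le, Real.rpow_div_two_eq_sqrt 3 hx1.le,
    Real.rpow_ofNat, Real.rpow_ofNat]
  set u := √x
  set s := √(1 - x)
  have hu : 0 < u := Real.sqrt_pos.mpr hx
  have hs : 0 < s := Real.sqrt_pos.mpr hx1
  have hxu : x = u^2 := (Real.sq_sqrt hx.le).symm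
  have hu6 : u ≤ 1/6 := (Real.sqrt_le_left (by norm_num)).mpr (by linarith)
  rw [div_lt_iff₀ (pow_pos hs 3), ← one_lt_sq_iff₀ (by positivity)]
  calc 1 < (1 + 3/2 * u^2 + 3/8 * u^3)^2 * (1 - u^2)^3 :=
        one_lt_sq_mul_one_sub_sq_pow_three u hu hu6
    _ = ((1 + 3/2 * x + 3/8 * u^3) * s^3)^2 := by
        rw [← hxu, ← Real.sq_sqrt hx1.le]; ring
end

section
/- For all real α ≥ 1/2 and all real x, c with 0 < x ≤ c < 1, we have 1/(1-x)^α ≤ 1 + (1/(1-c))^(α+1) · α · x. -/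
/-!
Bernoulli's inequality for the exponent `α + 1 ≥ 1` gives `1 - (α + 1) x ≤ (1 - x) ^ (α + 1)`,
i.e. `1 - x ≤ (1 - x) ^ (α + 1) + α x`; dividing by `(1 - x) ^ (α + 1)` yields the bound with
`1 - x` in place of `1 - c`, and `x ↦ (1 / (1 - x)) ^ (α + 1)` is increasing on `(-∞, 1)`.
-/

open Real

lemma one_sub_le_one_sub_rpow_add_mul {α x : ℝ} (hα : 0 ≤ α) (hx : x ≤ 1) :
    1 - x ≤ (1 - x) ^ (α + 1) + α * x := by
  have bernoulli : 1 + (α + 1) * (-x) ≤ (1 + -x) ^ (α + 1) :=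
    one_add_mul_self_le_rpow_one_add (by linarith) (by linarith)
  rw [← sub_eq_add_neg] at bernoulli
  linarith

lemma one_div_one_sub_rpow_le {α x : ℝ} (hα : 0 ≤ α) (hx : x < 1) :
    1 / (1 - x) ^ α ≤ 1 + (1 / (1 - x)) ^ (α + 1) * α * x := by
  have hpos : 0 < 1 - x := by linarith
  have hpow : 0 < (1 - x) ^ (α + 1) := rpow_pos_of_pos hpos _
  calc 1 / (1 - x) ^ α = (1 - x) / (1 - x) ^ (α + 1) := by
        rw [rpow_add hpos, rpow_one]
        field_simp
    _ ≤ ((1 - x) ^ (α + 1) + α * x) / (1 - x) ^ (α + 1) := by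
        gcongr
        exact one_sub_le_one_sub_rpow_add_mul hα hx.le
    _ = 1 + (1 / (1 - x)) ^ (α + 1) * α * x := by
        rw [div_rpow zero_le_one hpos.le, one_rpow]
        field_simp

lemma one_div_one_sub_rpow_le_of_le {p x c : ℝ} (hp : 0 ≤ p) (hxc : x ≤ c) (hc : c < 1) :
    (1 / (1 - x)) ^ p ≤ (1 / (1 - c)) ^ p := by
  have hx : 0 < 1 - x := by linarith
  gcongr

theorem stmt_1 (α x c : ℝ) (hα : 1/2 ≤ α) (hx : 0 < x) (hxc : x ≤ c) (hc : c < 1) :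
    1 / (1 - x) ^ α ≤ 1 + (1 / (1 - c)) ^ (α + 1) * α * x := by
  have hα0 : 0 ≤ α := by linarith
  calc 1 / (1 - x) ^ α ≤ 1 + (1 / (1 - x)) ^ (α + 1) * α * x :=
        one_div_one_sub_rpow_le hα0 (hxc.trans_lt hc)
    _ ≤ 1 + (1 / (1 - c)) ^ (α + 1) * α * x := by
        gcongr 1 + ?_ * _ * _
        exact one_div_one_sub_rpow_le_of_le (by linarith) hxc hc
end

section
/- For every integer n ≥ 50, 288π(-3 + π√(24(n-1)-1)) / ((24(n-1)-1)^(3/2) · (-6 + π√(24(n-1)-1))²) < 1/(2n²) + 1/n^(5/2). -/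
/-! Put x = √(24n - 25) and t = √n, so x² = 24t² - 25. For x ≥ 34 the left side is below
288/x⁴ + 1000/x⁵. Since x⁴ = 576t⁴ - 1200t² + 625, the first term exceeds 1/(2t⁴) only by
O(1/t⁶), which is below 1/(5t⁵); and x ≥ 9t/2 gives 1000/x⁵ < 4/(5t⁵). -/

section

open Real

lemma pi_quotient_lt {x : ℝ} (hx : 34 ≤ x) :
    288 * π * (-3 + π * x) / (x ^ 3 * (-6 + π * x) ^ 2) < 288 / x ^ 4 + 1000 / x ^ 5 := by
  have hpi_lo := pi_gt_d6
  have hpi_hi := pi_lt_d6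
  have hpx : 0 < -6 + π * x := by nlinarith
  -- with y = π x the difference of the cross-multiplied sides is
  -- 288 x (36 - 9 y) + 1000 (y - 6)², whose x² coefficient π (1000 π - 2592) is positive
  have hcross : 288 * π * (π * x - 3) * x ^ 2 < (288 * x + 1000) * (π * x - 6) ^ 2 := by
    nlinarith [mul_nonneg (sub_nonneg.2 hx) (sub_nonneg.2 hx)]
  rw [div_add_div _ _ (by positivity) (by positivity),
    div_lt_div_iff₀ (by positivity) (by positivity)]
  nlinarith [pow_pos (by linarith : (0:ℝ) < x) 8]

lemma div_pow_four_lt {x t : ℝ} (ht : 7 ≤ t) (hx : x ^ 2 = 24 * t ^ 2 - 25) :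
    288 / x ^ 4 < 1 / (2 * (t ^ 2) ^ 2) + 1 / 5 / t ^ 5 := by
  have ht0 : 0 < t := by linarith
  have hx4 : x ^ 4 = (24 * t ^ 2 - 25) ^ 2 := by rw [← hx]; ring
  have hquad : 0 < 1152 * t ^ 2 - 6000 * t - 2400 := by nlinarith
  rw [div_add_div _ _ (by positivity) (by positivity),
    div_lt_div_iff₀ (by rw [hx4]; nlinarith) (by positivity), hx4]
  nlinarith [mul_pos (pow_pos ht0 6) hquad, pow_pos ht0 5, pow_pos ht0 4]

lemma div_pow_five_lt {x t : ℝ} (ht : 3 ≤ t) (hx0 : 0 ≤ x) (hx : x ^ 2 = 24 * t ^ 2 - 25) :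
    1000 / x ^ 5 < 4 / 5 / t ^ 5 := by
  have ht0 : 0 < t := by linarith
  have hxt : 9 / 2 * t ≤ x := by nlinarith
  have hx5 : 59049 / 32 * t ^ 5 ≤ x ^ 5 := by
    have := pow_le_pow_left₀ (by positivity) hxt 5
    linarith [show (9 / 2 * t) ^ 5 = 59049 / 32 * t ^ 5 by ring]
  rw [div_lt_div_iff₀ (by nlinarith [pow_pos ht0 5]) (by positivity)]
  nlinarith [pow_pos ht0 5]

end

open Real in
theorem stmt_8 (n : ℕ) (hn : 50 ≤ n) :
    288 * π * (-3 + π * Real.sqrt (24 * ((n : ℝ) - 1) - 1)) /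
      ((24 * ((n : ℝ) - 1) - 1) ^ ((3:ℝ)/2) *
        (-6 + π * Real.sqrt (24 * ((n : ℝ) - 1) - 1)) ^ 2) <
      1 / (2 * (n : ℝ) ^ 2) + 1 / (n : ℝ) ^ ((5:ℝ)/2) := by
  have hn' : (50:ℝ) ≤ n := by exact_mod_cast hn
  have hm : 0 ≤ 24 * ((n:ℝ) - 1) - 1 := by linarith
  rw [rpow_div_two_eq_sqrt _ hm, rpow_div_two_eq_sqrt _ (by linarith), rpow_ofNat, rpow_ofNat]
  set x := √(24 * ((n:ℝ) - 1) - 1)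
  set t := √(n:ℝ)
  have htn : t ^ 2 = n := sq_sqrt (by linarith)
  have hx : x ^ 2 = 24 * t ^ 2 - 25 := by rw [sq_sqrt hm, htn]; ring
  have ht : 7 ≤ t := le_sqrt_of_sq_le (by linarith)
  have hx0 : 0 ≤ x := sqrt_nonneg _
  calc _ < 288 / x ^ 4 + 1000 / x ^ 5 := pi_quotient_lt (by nlinarith)
    _ < 1 / (2 * (t ^ 2) ^ 2) + 1 / 5 / t ^ 5 + 4 / 5 / t ^ 5 :=
        add_lt_add (div_pow_four_lt ht hx) (div_pow_five_lt (by linarith) hx0 hx)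
    _ = 1 / (2 * (n:ℝ) ^ 2) + 1 / t ^ 5 := by rw [htn]; ring
end

section
/- For real ν ≥ 1/2 and reals 0 < x < y, one has e^(2√x - 2√y) < L_ν(x)/L_ν(y) < e^(2√x - 2√y) · (y/x)^ν, where L_ν(x) = Σ_{m≥0} x^m / (m! · Γ(m+ν+1)). -/
/-!
Write `t = σ²`. Using `L_ν' = L_{ν+1}` and the recurrence
`L_{ν-1}(t) = ν L_ν(t) + t L_{ν+1}(t)`, the function
`Φ(σ) = e^{2σ} (L_{ν-1}(σ²) - σ L_ν(σ²))` has derivative `(2ν - 1) e^{2σ} L_ν(σ²) ≥ 0`, and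
`Φ(0) = 1 / Γ(ν) > 0`; hence `σ L_ν(σ²) < L_{ν-1}(σ²)` for `σ ≥ 0`. Applied at `ν + 1` and at `ν`,
this inequality says that `e^{-2σ} L_ν(σ²)` is strictly decreasing and `σ^{2ν} e^{-2σ} L_ν(σ²)`
strictly increasing in `σ > 0`. Comparing their values at `√x < √y` gives the two bounds.
-/

open Real Filter
open scoped Nat

theorem hasDerivAt_tsum_mul_pow {a : ℕ → ℝ} {t : ℝ} (ha : Summable fun m => a m * t ^ m)
    (ha' : ∀ r, Summable fun m => (m + 1) * a (m + 1) * r ^ m) :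
    HasDerivAt (fun z => ∑' m, a m * z ^ m) (∑' m, (m + 1) * a (m + 1) * t ^ m) t := by
  set R := |t| + 1
  have hR : 0 < R := by positivity
  have ht : t ∈ Metric.ball 0 R := by simp [R]
  have hbound : Summable fun m : ℕ => |a m| * (m * R ^ (m - 1)) := by
    rw [← summable_nat_add_iff 1]
    refine (ha' R).abs.congr fun m => ?_
    rw [abs_mul, abs_mul, abs_of_pos (pow_pos hR m), abs_of_pos m.cast_add_one_pos]
    push_cast
    ring
  have hderiv := hasDerivAt_tsum_of_isPreconnected (t := Metric.ball 0 R) hbound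
    Metric.isOpen_ball (convex_ball 0 R).isPreconnected
    (g := fun m z => a m * z ^ m) (g' := fun m z => a m * (m * z ^ (m - 1)))
    (fun m z _ => (hasDerivAt_pow m z).const_mul (a m))
    (fun m z hz => by
      rw [Real.norm_eq_abs, abs_mul, abs_mul, abs_pow, Nat.abs_cast]
      gcongr
      exact (mem_ball_zero_iff.1 hz).le) ht ha ht
  rw [Summable.tsum_eq_zero_add, Nat.cast_zero, zero_mul, mul_zero, zero_add] at hderiv
  · refine hderiv.congr_deriv (tsum_congr fun m => ?_)
    push_cast
    ring
  · refine (summable_nat_add_iff 1).1 ((ha' t).congr fun m => ?_)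
    push_cast
    ring

noncomputable def besselLCoeff (ν : ℝ) (m : ℕ) : ℝ := (m ! * Gamma (m + ν + 1))⁻¹

noncomputable def besselL (ν t : ℝ) : ℝ := ∑' m, besselLCoeff ν m * t ^ m

theorem besselLCoeff_pos {ν : ℝ} (hν : -1 < ν) (m : ℕ) : 0 < besselLCoeff ν m := by
  have : 0 < (m : ℝ) + ν + 1 := by linarith [m.cast_nonneg (α := ℝ)]
  have := Gamma_pos_of_pos this
  unfold besselLCoeff
  positivity

section
variable (ν : ℝ)

theorem succ_mul_besselLCoeff_succ (m : ℕ) :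
    (m + 1) * besselLCoeff ν (m + 1) = besselLCoeff (ν + 1) m := by
  rw [besselLCoeff, besselLCoeff, Nat.factorial_succ, Nat.cast_mul, Nat.cast_succ,
    show (m : ℝ) + 1 + ν + 1 = m + (ν + 1) + 1 by ring, mul_assoc, mul_inv (_ + 1),
    mul_inv_cancel_left₀ m.cast_add_one_ne_zero]

theorem besselLCoeff_sub_one (m : ℕ) :
    besselLCoeff (ν - 1) m = (m + ν) * besselLCoeff ν m := by
  rw [besselLCoeff, besselLCoeff, show (m : ℝ) + (ν - 1) + 1 = m + ν by ring]
  rcases eq_or_ne ((m : ℝ) + ν) 0 with h | h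
  · -- `Gamma` vanishes at its poles, so both sides are `0`
    simp [h, Gamma_zero]
  · rw [Gamma_add_one h]
    field_simp

theorem summable_besselLCoeff_mul_pow (t : ℝ) :
    Summable fun m => besselLCoeff ν m * t ^ m := by
  refine .of_norm_bounded_eventually_nat (Real.summable_pow_div_factorial |t|) ?_
  filter_upwards [eventually_ge_atTop ⌈1 - ν⌉₊] with m hm
  have hΓ : 1 ≤ Gamma (m + ν + 1) := by
    have : 1 - ν ≤ m := Nat.ceil_le.1 hm
    simpa only [Gamma_two] using
      Gamma_strictMonoOn_Ici.monotoneOn (a := 2) (by simp) (by simp; linarith) (by linarith)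
  rw [besselLCoeff, norm_mul, norm_inv, norm_pow, norm_mul, Real.norm_eq_abs, Real.norm_eq_abs,
    Real.norm_eq_abs, Nat.abs_cast, abs_of_pos (by linarith), inv_mul_eq_div]
  gcongr
  exact le_mul_of_one_le_right (by positivity) hΓ

theorem hasSum_natCast_mul_besselLCoeff_mul_pow (t : ℝ) :
    HasSum (fun m => m * besselLCoeff ν m * t ^ m) (t * besselL (ν + 1) t) := by
  rw [← hasSum_nat_add_iff' 1]
  simp only [Finset.range_one, Finset.sum_singleton, Nat.cast_zero, zero_mul, sub_zero]
  refine ((summable_besselLCoeff_mul_pow (ν + 1) t).hasSum.mul_left t).congr_fun fun m => ?_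
  rw [← succ_mul_besselLCoeff_succ]
  push_cast
  ring

theorem besselL_sub_one (t : ℝ) :
    besselL (ν - 1) t = ν * besselL ν t + t * besselL (ν + 1) t := by
  have := ((summable_besselLCoeff_mul_pow ν t).hasSum.mul_left ν).add
    (hasSum_natCast_mul_besselLCoeff_mul_pow ν t)
  refine (this.congr_fun fun m => ?_).tsum_eq
  rw [besselLCoeff_sub_one]
  ring

theorem hasDerivAt_besselL (t : ℝ) : HasDerivAt (besselL ν) (besselL (ν + 1) t) t := by
  refine (hasDerivAt_tsum_mul_pow (summable_besselLCoeff_mul_pow ν t) fun r =>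
    (summable_besselLCoeff_mul_pow (ν + 1) r).congr fun m => ?_).congr_deriv
    (tsum_congr fun m => ?_) <;> rw [succ_mul_besselLCoeff_succ]

theorem hasDerivAt_besselL_sq (σ : ℝ) :
    HasDerivAt (fun σ => besselL ν (σ ^ 2)) (2 * σ * besselL (ν + 1) (σ ^ 2)) σ := by
  refine ((hasDerivAt_besselL ν (σ ^ 2)).comp σ (hasDerivAt_pow 2 σ)).congr_deriv ?_
  simp only [Nat.cast_ofNat, Nat.add_one_sub_one, pow_one]
  ring

end

section
variable {ν : ℝ}

theorem besselL_pos (hν : -1 < ν) {t : ℝ} (ht : 0 ≤ t) : 0 < besselL ν t :=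
  (summable_besselLCoeff_mul_pow ν t).tsum_pos
    (fun m => mul_nonneg (besselLCoeff_pos hν m).le (pow_nonneg ht m)) 0
    (by simpa using besselLCoeff_pos hν 0)

theorem monotone_exp_mul_besselL_sub_mul_besselL (hν : 1 / 2 ≤ ν) :
    Monotone fun σ => exp (2 * σ) * (besselL (ν - 1) (σ ^ 2) - σ * besselL ν (σ ^ 2)) := by
  have hderiv (σ : ℝ) : HasDerivAt
      (fun σ => exp (2 * σ) * (besselL (ν - 1) (σ ^ 2) - σ * besselL ν (σ ^ 2)))
      (exp (2 * σ) * ((2 * ν - 1) * besselL ν (σ ^ 2))) σ := by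
    have hA := hasDerivAt_besselL_sq (ν - 1) σ
    rw [sub_add_cancel] at hA
    have hB := (hasDerivAt_id' σ).mul (hasDerivAt_besselL_sq ν σ)
    have hE := ((hasDerivAt_id' σ).const_mul 2).exp
    refine (hE.mul (hA.sub hB)).congr_deriv ?_
    simp only [Pi.sub_apply, Pi.mul_apply]
    linear_combination 2 * exp (2 * σ) * besselL_sub_one ν (σ ^ 2)
  refine monotone_of_deriv_nonneg (fun σ => (hderiv σ).differentiableAt) fun σ => ?_
  rw [(hderiv σ).deriv]
  have hL := besselL_pos (by linarith : -1 < ν) (sq_nonneg σ)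
  have hν' : 0 ≤ 2 * ν - 1 := by linarith
  positivity

theorem mul_besselL_sq_lt (hν : 1 / 2 ≤ ν) {σ : ℝ} (hσ : 0 ≤ σ) :
    σ * besselL ν (σ ^ 2) < besselL (ν - 1) (σ ^ 2) := by
  have hΦ := monotone_exp_mul_besselL_sub_mul_besselL hν hσ
  norm_num at hΦ
  have hpos := pos_of_mul_pos_right ((besselL_pos (by linarith) le_rfl).trans_le hΦ) (exp_pos _).le
  linarith

theorem strictAntiOn_exp_mul_besselL_sq (hν : -(1 / 2) ≤ ν) :
    StrictAntiOn (fun σ => exp (-2 * σ) * besselL ν (σ ^ 2)) (Set.Ici 0) := by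
  have hderiv (σ : ℝ) : HasDerivAt (fun σ => exp (-2 * σ) * besselL ν (σ ^ 2))
      (2 * exp (-2 * σ) * (σ * besselL (ν + 1) (σ ^ 2) - besselL ν (σ ^ 2))) σ := by
    have hE := ((hasDerivAt_id' σ).const_mul (-2)).exp
    refine (hE.mul (hasDerivAt_besselL_sq ν σ)).congr_deriv ?_
    ring
  refine strictAntiOn_of_deriv_neg (convex_Ici 0)
    (fun σ _ => (hderiv σ).continuousAt.continuousWithinAt) fun σ hσ => ?_
  rw [interior_Ici] at hσ
  have hkey := mul_besselL_sq_lt (ν := ν + 1) (by linarith) (le_of_lt hσ)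
  rw [add_sub_cancel_right] at hkey
  rw [(hderiv σ).deriv]
  exact mul_neg_of_pos_of_neg (by positivity) (sub_neg.2 hkey)

theorem strictMonoOn_rpow_mul_exp_mul_besselL_sq (hν : 1 / 2 ≤ ν) :
    StrictMonoOn (fun σ => (σ ^ 2) ^ ν * (exp (-2 * σ) * besselL ν (σ ^ 2))) (Set.Ioi 0) := by
  have hderiv (σ : ℝ) (hσ : 0 < σ) :
      HasDerivAt (fun σ => (σ ^ 2) ^ ν * (exp (-2 * σ) * besselL ν (σ ^ 2)))
      (2 * σ * (σ ^ 2) ^ (ν - 1) * exp (-2 * σ) *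
        (besselL (ν - 1) (σ ^ 2) - σ * besselL ν (σ ^ 2))) σ := by
    have hP := (hasDerivAt_pow 2 σ).rpow_const (p := ν) (Or.inl (by positivity))
    have hE := ((hasDerivAt_id' σ).const_mul (-2)).exp
    refine (hP.mul (hE.mul (hasDerivAt_besselL_sq ν σ))).congr_deriv ?_
    rw [besselL_sub_one, show (σ ^ 2) ^ ν = (σ ^ 2) ^ (ν - 1) * σ ^ 2 by
      rw [← rpow_add_one (by positivity), sub_add_cancel]]
    simp only [Pi.mul_apply]
    push_cast
    ring
  refine strictMonoOn_of_deriv_pos (convex_Ioi 0)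
    (fun σ hσ => (hderiv σ hσ).continuousAt.continuousWithinAt) fun σ hσ => ?_
  rw [interior_Ioi, Set.mem_Ioi] at hσ
  rw [(hderiv σ hσ).deriv]
  have hkey := sub_pos.2 (mul_besselL_sq_lt hν (le_of_lt hσ))
  have hpow : 0 < (σ ^ 2) ^ (ν - 1) := rpow_pos_of_pos (pow_pos hσ 2) _
  positivity

end

open Real in
theorem stmt_14 (ν x y : ℝ) (hν : 1/2 ≤ ν) (hx : 0 < x) (hxy : x < y)
    (L : ℝ → ℝ → ℝ)
    (hL : ∀ μ t : ℝ, L μ t = ∑' m : ℕ, t ^ m / (m.factorial * Real.Gamma (m + μ + 1))) :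
    Real.exp (2 * Real.sqrt x - 2 * Real.sqrt y) < L ν x / L ν y ∧
      L ν x / L ν y < Real.exp (2 * Real.sqrt x - 2 * Real.sqrt y) * (y / x) ^ ν := by
  obtain rfl : L = besselL :=
    funext₂ fun μ t => (hL μ t).trans (tsum_congr fun m => div_eq_inv_mul _ _)
  have hy := hx.trans hxy
  have hsqrt : √x < √y := sqrt_lt_sqrt hx.le hxy
  have hlower := strictAntiOn_exp_mul_besselL_sq (ν := ν) (by linarith)
    (sqrt_nonneg x) (sqrt_nonneg y) hsqrt
  have hupper := strictMonoOn_rpow_mul_exp_mul_besselL_sq hν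
    (sqrt_pos.2 hx) (sqrt_pos.2 hy) hsqrt
  simp only [sq_sqrt hx.le, sq_sqrt hy.le] at hlower hupper
  have hLy := besselL_pos (ν := ν) (by linarith) hy.le
  rw [show 2 * √x - 2 * √y = -2 * √y - -2 * √x by ring, exp_sub, div_rpow hy.le hx.le]
  constructor
  · rw [div_lt_div_iff₀ (exp_pos _) hLy]
    linarith
  · rw [div_lt_iff₀ hLy, div_mul_div_comm, div_mul_eq_mul_div, lt_div_iff₀ (by positivity)]
    linarith
end

section
/- Suppose f(x) = Σ α_m x^m and g(x) = Σ β_m x^m are power series converging for all real x, with β_m > 0 for all m, and the sequence (α_m/β_m) is strictly decreasing. Then f(x)/g(x) is strictly decreasing for x > 0. -/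
/-!
For `0 < x < y`, expand `f x * g y - f y * g x` as a double series over `(m, n)` and pair the
terms `(m, n)` and `(n, m)`. The pair equals `β m y^m β n y^n (a m - a n) (c m - c n)` with
`a = α / β` and `c k = (x / y) ^ k`; both sequences are strictly decreasing, so every pair is
nonnegative and the pair `(0, 1)` is positive.
-/

theorem StrictAnti.sub_mul_sub_pos {ι : Type*} [LinearOrder ι] {a c : ι → ℝ}
    (ha : StrictAnti a) (hc : StrictAnti c) {m n : ι} (hmn : m ≠ n) :
    0 < (a m - a n) * (c m - c n) := by
  rcases hmn.lt_or_gt with h | h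
  · exact mul_pos (sub_pos.2 (ha h)) (sub_pos.2 (hc h))
  · exact mul_pos_of_neg_of_neg (sub_neg.2 (ha h)) (sub_neg.2 (hc h))

theorem HasSum.mul_of_real {ι κ : Type*} {u : ι → ℝ} {v : κ → ℝ} {s t : ℝ}
    (hu : HasSum u s) (hv : HasSum v t) :
    HasSum (fun p : ι × κ => u p.1 * v p.2) (s * t) :=
  hu.mul hv <| summable_mul_of_summable_norm
    (summable_norm_iff.2 hu.summable) (summable_norm_iff.2 hv.summable)

theorem HasSum.add_comp_swap {ι M : Type*} [AddCommMonoid M] [TopologicalSpace M]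
    [ContinuousAdd M] {F : ι × ι → M} {s : M} (h : HasSum F s) :
    HasSum (fun p => F p + F p.swap) (s + s) :=
  h.add ((Equiv.prodComm ι ι).hasSum_iff.2 h)

section PowerSeries

variable {f g : ℝ → ℝ} {α β : ℕ → ℝ}

theorem pos_of_hasSum_mul_pow {x s : ℝ} (hs : HasSum (fun m : ℕ => β m * x ^ m) s)
    (hβ : ∀ m, 0 < β m) (hx : 0 < x) : 0 < s :=
  hasSum_lt (f := 0) (i := 0) (fun m => (mul_pos (hβ m) (pow_pos hx m)).le)
    (by simpa using hβ 0) hasSum_zero hs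

theorem mul_lt_mul_of_hasSum_pow_of_strictAnti_div
    (hf : ∀ x : ℝ, HasSum (fun m : ℕ => α m * x ^ m) (f x))
    (hg : ∀ x : ℝ, HasSum (fun m : ℕ => β m * x ^ m) (g x))
    (hβ : ∀ m, 0 < β m) (hdec : StrictAnti (fun m : ℕ => α m / β m))
    {x y : ℝ} (hx : 0 < x) (hxy : x < y) :
    f y * g x < f x * g y := by
  have hy : 0 < y := hx.trans hxy
  set c : ℕ → ℝ := fun k => (x / y) ^ k
  have hc : StrictAnti c :=
    fun _ _ h => pow_lt_pow_right_of_lt_one₀ (by positivity) ((div_lt_one hy).2 hxy) h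
  set T : ℕ × ℕ → ℝ := fun p =>
    α p.1 * x ^ p.1 * (β p.2 * y ^ p.2) - α p.1 * y ^ p.1 * (β p.2 * x ^ p.2)
  have hT : HasSum T (f x * g y - f y * g x) :=
    ((hf x).mul_of_real (hg y)).sub ((hf y).mul_of_real (hg x))
  have hpair : ∀ p : ℕ × ℕ, T p + T p.swap =
      β p.1 * y ^ p.1 * (β p.2 * y ^ p.2) *
        ((α p.1 / β p.1 - α p.2 / β p.2) * (c p.1 - c p.2)) := by
    rintro ⟨m, n⟩
    have := (hβ m).ne'
    have := (hβ n).ne'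
    simp only [T, c, Prod.swap, div_pow]
    field_simp
    ring
  have hpair_pos : ∀ m n : ℕ, m ≠ n → 0 < T (m, n) + T (m, n).swap := fun m n hmn => by
    rw [hpair]
    exact mul_pos (by have := hβ m; have := hβ n; positivity) (hdec.sub_mul_sub_pos hc hmn)
  have hpair_nonneg : ∀ p : ℕ × ℕ, 0 ≤ T p + T p.swap := by
    rintro ⟨m, n⟩
    rcases eq_or_ne m n with rfl | hmn
    · rw [hpair]; simp
    · exact (hpair_pos m n hmn).le
  have : 0 < f x * g y - f y * g x + (f x * g y - f y * g x) :=
    hasSum_lt (f := 0) (i := (0, 1)) hpair_nonneg (hpair_pos 0 1 zero_ne_one) hasSum_zero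
      hT.add_comp_swap
  linarith

end PowerSeries

theorem stmt_15 (f g : ℝ → ℝ) (α β : ℕ → ℝ)
    (hf : ∀ x : ℝ, HasSum (fun m : ℕ => α m * x ^ m) (f x))
    (hg : ∀ x : ℝ, HasSum (fun m : ℕ => β m * x ^ m) (g x))
    (hβ : ∀ m, 0 < β m)
    (hdec : StrictAnti (fun m : ℕ => α m / β m)) :
    StrictAntiOn (fun x => f x / g x) (Set.Ioi (0 : ℝ)) := by
  intro x (hx : 0 < x) y (hy : 0 < y) hxy
  rw [div_lt_div_iff₀ (pos_of_hasSum_mul_pow (hg y) hβ hy) (pos_of_hasSum_mul_pow (hg x) hβ hx)]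
  exact mul_lt_mul_of_hasSum_pow_of_strictAnti_div hf hg hβ hdec hx hxy
end

section
/- Let f be a function infinitely differentiable on [1, ∞) with (-1)^(k-1) f^(k)(x) > 0 for all k ≥ 1 and x ≥ 1. Then for every integer r > 1 and x ≥ 1, (-1)^(r-1) f^(r)(x+r) ≤ (-1)^(r-1) Δ^r f(x) ≤ (-1)^(r-1) f^(r)(x), where Δf(x) = f(x+1) - f(x). -/
open Set

private lemma ud : UniqueDiffOn ℝ (Set.Ici (1:ℝ)) := uniqueDiffOn_Ici 1

private lemma hDiff {f : ℝ → ℝ} (hf : ContDiffOn ℝ (⊤ : ℕ∞) f (Set.Ici 1)) (k : ℕ) :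
    DifferentiableOn ℝ (iteratedDerivWithin k f (Set.Ici 1)) (Set.Ici 1) :=
  hf.differentiableOn_iteratedDerivWithin (by exact_mod_cast WithTop.coe_lt_top _) ud

private lemma hHDW {f : ℝ → ℝ} (hf : ContDiffOn ℝ (⊤ : ℕ∞) f (Set.Ici 1)) (k : ℕ) {x : ℝ}
    (hx : 1 ≤ x) :
    HasDerivWithinAt (iteratedDerivWithin k f (Set.Ici 1))
      (iteratedDerivWithin (k+1) f (Set.Ici 1) x) (Set.Ici 1) x := by
  have h := (hDiff hf k x hx).hasDerivWithinAt
  rwa [← iteratedDerivWithin_succ] at h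

private lemma hHDA {f : ℝ → ℝ} (hf : ContDiffOn ℝ (⊤ : ℕ∞) f (Set.Ici 1)) (k : ℕ) {x : ℝ}
    (hx : 1 < x) :
    HasDerivAt (iteratedDerivWithin k f (Set.Ici 1))
      (iteratedDerivWithin (k+1) f (Set.Ici 1) x) x :=
  (hHDW hf k hx.le).hasDerivAt (Ici_mem_nhds hx)

private lemma hAnti {f : ℝ → ℝ} (hf : ContDiffOn ℝ (⊤ : ℕ∞) f (Set.Ici 1))
    (hsign : ∀ k : ℕ, 1 ≤ k → ∀ x : ℝ, 1 ≤ x →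
      0 < (-1 : ℝ) ^ (k - 1) * iteratedDerivWithin k f (Set.Ici 1) x) (k : ℕ) :
    StrictAntiOn (fun x => (-1:ℝ)^k * iteratedDerivWithin (k+1) f (Set.Ici 1) x)
      (Set.Ici 1) := by
  apply strictAntiOn_of_deriv_neg (convex_Ici 1)
  · exact ((hDiff hf (k+1)).continuousOn).const_smul ((-1:ℝ)^k)
  · intro x hx
    rw [interior_Ici] at hx
    have hd : HasDerivAt (fun y => (-1:ℝ)^k * iteratedDerivWithin (k+1) f (Set.Ici 1) y)
        ((-1:ℝ)^k * iteratedDerivWithin (k+2) f (Set.Ici 1) x) x :=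
      (hHDA hf (k+1) hx).const_mul _
    rw [hd.deriv]
    have h2 := hsign (k+2) (by omega) x hx.le
    rw [show k+2-1 = k+1 from rfl] at h2
    have hpow : ((-1:ℝ))^(k+1) = -(-1:ℝ)^k := by ring
    rw [hpow] at h2
    linarith

private lemma hStep {f : ℝ → ℝ} (hf : ContDiffOn ℝ (⊤ : ℕ∞) f (Set.Ici 1))
    (hsign : ∀ k : ℕ, 1 ≤ k → ∀ x : ℝ, 1 ≤ x →
      0 < (-1 : ℝ) ^ (k - 1) * iteratedDerivWithin k f (Set.Ici 1) x)
    (k : ℕ) {a : ℝ} (ha : 1 ≤ a) :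
    (-1:ℝ)^k * iteratedDerivWithin (k+1) f (Set.Ici 1) (a+1) ≤
      (-1:ℝ)^k * (iteratedDerivWithin k f (Set.Ici 1) (a+1)
        - iteratedDerivWithin k f (Set.Ici 1) a) ∧
    (-1:ℝ)^k * (iteratedDerivWithin k f (Set.Ici 1) (a+1)
        - iteratedDerivWithin k f (Set.Ici 1) a) ≤
      (-1:ℝ)^k * iteratedDerivWithin (k+1) f (Set.Ici 1) a := by
  have hlt : a < a + 1 := by linarith
  obtain ⟨c, hc, hceq⟩ := exists_hasDerivAt_eq_slope (iteratedDerivWithin k f (Set.Ici 1))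
    (iteratedDerivWithin (k+1) f (Set.Ici 1)) hlt
    (((hDiff hf k).continuousOn).mono (Icc_subset_Ici_self.trans (by
      intro y hy; exact le_trans ha hy)))
    (fun y hy => hHDA hf k (by rcases hy with ⟨h1, _⟩; linarith))
  rw [show a + 1 - a = 1 by ring, div_one] at hceq
  have hc1 : (1:ℝ) ≤ c := by rcases hc with ⟨h1, _⟩; linarith
  have hA := hAnti hf hsign k
  have h1 := hA (show c ∈ Set.Ici (1:ℝ) from hc1) (show a+1 ∈ Set.Ici (1:ℝ) by
      simp; linarith) hc.2
  have h2 := hA (show a ∈ Set.Ici (1:ℝ) from ha) (show c ∈ Set.Ici (1:ℝ) from hc1) hc.1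
  simp only at h1 h2
  rw [hceq] at h1 h2
  constructor <;> [linarith [mul_sub ((-1:ℝ)^k) (iteratedDerivWithin k f (Set.Ici 1) (a+1))
    (iteratedDerivWithin k f (Set.Ici 1) a)]; skip]
  nlinarith [h2]

private lemma hShiftC {f : ℝ → ℝ} (hf : ContDiffOn ℝ (⊤ : ℕ∞) f (Set.Ici 1)) :
    ContDiffOn ℝ (⊤ : ℕ∞) (fun y => f (y+1)) (Set.Ici 1) :=
  hf.comp ((contDiff_id.add contDiff_const).contDiffOn)
    (fun y hy => by simp only [mem_Ici] at hy ⊢; linarith)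

private lemma hShift {f : ℝ → ℝ} (hf : ContDiffOn ℝ (⊤ : ℕ∞) f (Set.Ici 1)) (k : ℕ) :
    ∀ x : ℝ, 1 ≤ x → iteratedDerivWithin k (fun y => f (y+1)) (Set.Ici 1) x
      = iteratedDerivWithin k f (Set.Ici 1) (x+1) := by
  induction k with
  | zero => intro x hx; simp
  | succ k IH =>
    intro x hx
    have hx1 : (1:ℝ) ≤ x + 1 := by linarith
    have hcong : Set.EqOn (iteratedDerivWithin k (fun y => f (y+1)) (Set.Ici 1))
        (fun y => iteratedDerivWithin k f (Set.Ici 1) (y+1)) (Set.Ici 1) :=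
      fun y hy => IH y hy
    have hD : HasDerivWithinAt (fun y => iteratedDerivWithin k f (Set.Ici 1) (y+1))
        (iteratedDerivWithin (k+1) f (Set.Ici 1) (x+1)) (Set.Ici 1) x := by
      have h1 := hHDW hf k hx1
      have h2 : HasDerivWithinAt (fun y : ℝ => y + 1) 1 (Set.Ici 1) x :=
        ((hasDerivAt_id x).add_const 1).hasDerivWithinAt
      have h3 := h1.comp x h2 (fun y hy => by simp only [mem_Ici] at hy ⊢; linarith)
      simp only [mul_one] at h3
      exact h3
    rw [iteratedDerivWithin_succ,
      derivWithin_congr hcong (IH x hx), hD.derivWithin (ud x hx),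
      iteratedDerivWithin_succ]

private lemma hDg {f : ℝ → ℝ} (hf : ContDiffOn ℝ (⊤ : ℕ∞) f (Set.Ici 1)) (k : ℕ) {x : ℝ}
    (hx : 1 ≤ x) :
    iteratedDerivWithin k (fun y => -(f (y+1) - f y)) (Set.Ici 1) x
      = -(iteratedDerivWithin k f (Set.Ici 1) (x+1) - iteratedDerivWithin k f (Set.Ici 1) x) := by
  have h1 : (fun y => -(f (y+1) - f y)) = -((fun y => f (y+1)) - f) := rfl
  rw [h1, iteratedDerivWithin_neg,
    iteratedDerivWithin_sub (Set.mem_Ici.mpr hx) ud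
      (((hShiftC hf).contDiffWithinAt (Set.mem_Ici.mpr hx)).of_le (by exact_mod_cast le_top))
      ((hf.contDiffWithinAt (Set.mem_Ici.mpr hx)).of_le (by exact_mod_cast le_top)),
    hShift hf k x hx]

private lemma hIterNeg (r : ℕ) : ∀ (h : ℝ → ℝ) (x : ℝ),
    (fun g : ℝ → ℝ => fun y => g (y + 1) - g y)^[r] (fun y => -(h y)) x
      = -((fun g : ℝ → ℝ => fun y => g (y + 1) - g y)^[r] h x) := by
  induction r with
  | zero => intro h x; simp
  | succ r IH =>
    intro h x
    rw [Function.iterate_succ_apply, Function.iterate_succ_apply]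
    have h1 : (fun y => (fun y => -(h y)) (y + 1) - (fun y => -(h y)) y)
        = fun y => -((h (y + 1) - h y)) := by funext y; ring
    rw [h1]
    exact IH (fun z => h (z + 1) - h z) x

private lemma hMain : ∀ (r : ℕ), 1 ≤ r → ∀ (f : ℝ → ℝ), ContDiffOn ℝ (⊤ : ℕ∞) f (Set.Ici 1) →
    (∀ k : ℕ, 1 ≤ k → ∀ x : ℝ, 1 ≤ x →
      0 < (-1 : ℝ) ^ (k - 1) * iteratedDerivWithin k f (Set.Ici 1) x) →
    ∀ x : ℝ, 1 ≤ x →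
    (-1 : ℝ) ^ (r - 1) * iteratedDerivWithin r f (Set.Ici 1) (x + r) ≤
      (-1 : ℝ) ^ (r - 1) * ((fun g : ℝ → ℝ => fun y => g (y + 1) - g y)^[r] f x) ∧
    (-1 : ℝ) ^ (r - 1) * ((fun g : ℝ → ℝ => fun y => g (y + 1) - g y)^[r] f x) ≤
      (-1 : ℝ) ^ (r - 1) * iteratedDerivWithin r f (Set.Ici 1) x := by
  refine Nat.le_induction ?_ ?_
  · intro f hf hsign x hx
    have hs := hStep hf hsign 0 hx
    simp only [pow_zero, one_mul, iteratedDerivWithin_zero, zero_add] at hs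
    simp only [Function.iterate_one, Nat.cast_one, Nat.sub_self, pow_zero, one_mul]
    exact hs
  · intro r hr IH f hf hsign x hx
    obtain ⟨m, rfl⟩ : ∃ m, r = m + 1 := ⟨r - 1, by omega⟩
    have hg : ContDiffOn ℝ (⊤ : ℕ∞) (fun y => -(f (y + 1) - f y)) (Set.Ici 1) :=
      ((hShiftC hf).sub hf).neg
    have hsg : ∀ k : ℕ, 1 ≤ k → ∀ y : ℝ, 1 ≤ y →
        0 < (-1 : ℝ) ^ (k - 1) *
          iteratedDerivWithin k (fun y => -(f (y + 1) - f y)) (Set.Ici 1) y := by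
      intro k hk y hy
      obtain ⟨n, rfl⟩ : ∃ n, k = n + 1 := ⟨k - 1, by omega⟩
      rw [hDg hf (n + 1) hy]
      have hA : (-1:ℝ)^n * iteratedDerivWithin (n+1) f (Set.Ici 1) (y+1)
          < (-1:ℝ)^n * iteratedDerivWithin (n+1) f (Set.Ici 1) y :=
        hAnti hf hsign n (Set.mem_Ici.mpr hy)
          (Set.mem_Ici.mpr (show (1:ℝ) ≤ y + 1 by linarith)) (by linarith)
      simp only [Nat.add_sub_cancel]
      linarith
    have IH' := IH (fun y => -(f (y + 1) - f y)) hg hsg x hx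
    simp only [Nat.add_sub_cancel] at IH' ⊢
    -- rewrite iterated derivatives of g
    rw [hDg hf (m + 1) hx, hDg hf (m + 1)
      (show (1:ℝ) ≤ x + ((m + 1 : ℕ) : ℝ) by push_cast; linarith)] at IH'
    have hit : (fun g : ℝ → ℝ => fun y => g (y + 1) - g y)^[m + 1]
        (fun y => -(f (y + 1) - f y)) x
        = -((fun g : ℝ → ℝ => fun y => g (y + 1) - g y)^[m + 1 + 1] f x) :=
      hIterNeg (m + 1) (fun y => f (y + 1) - f y) x
    rw [hit] at IH'
    have hstep1 := hStep hf hsign (m + 1) hx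
    have hstep2 := hStep hf hsign (m + 1)
      (show (1:ℝ) ≤ x + ((m + 1 : ℕ) : ℝ) by push_cast; linarith)
    have hc : x + ((m + 1 + 1 : ℕ) : ℝ) = x + ((m + 1 : ℕ) : ℝ) + 1 := by push_cast; ring
    rw [hc]
    have hpw : ((-1:ℝ))^(m+1) = -(-1:ℝ)^m := by ring
    rw [hpw] at hstep1 hstep2 ⊢
    obtain ⟨h1, h2⟩ := IH'
    obtain ⟨h3, h4⟩ := hstep1
    obtain ⟨h5, h6⟩ := hstep2
    constructor <;> nlinarith [h1, h2, h3, h4, h5, h6]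

theorem stmt_16 (f : ℝ → ℝ) (hf : ContDiffOn ℝ (⊤ : ℕ∞) f (Set.Ici 1))
    (hsign : ∀ k : ℕ, 1 ≤ k → ∀ x : ℝ, 1 ≤ x →
      0 < (-1 : ℝ) ^ (k - 1) * iteratedDerivWithin k f (Set.Ici 1) x)
    (r : ℕ) (hr : 1 < r) (x : ℝ) (hx : 1 ≤ x) :
    (-1 : ℝ) ^ (r - 1) * iteratedDerivWithin r f (Set.Ici 1) (x + r) ≤
      (-1 : ℝ) ^ (r - 1) * ((fun g : ℝ → ℝ => fun y => g (y + 1) - g y)^[r] f x) ∧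
    (-1 : ℝ) ^ (r - 1) * ((fun g : ℝ → ℝ => fun y => g (y + 1) - g y)^[r] f x) ≤
      (-1 : ℝ) ^ (r - 1) * iteratedDerivWithin r f (Set.Ici 1) x := by
  exact hMain r hr.le f hf hsign x hx
end
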